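/- arXiv:1707.00219 — 3 statements merged into one kernel-verified Lean document; each statement's English description precedes it below -/
import Mathlib

section
/- Every β-monotone path of width γ < 180° has spanning ratio at most 1/cos(γ/2): for a polygonal path (v₀, …, v_k) in ℝ² all of whose edge vectors lie in a closed wedge of angular width γ < 180° centered at direction β, the total length ∑ |v_{i+1} − v_i| is at most |v_k − v₀| / cos(γ/2). -/
open Real RealInnerProductSpace

/-- The unit vector in direction `θ` (radians) in the Euclidean plane. -/
noncomputable def dir (θ : ℝ) : EuclideanSpace ℝ (Fin 2) :=
  (WithLp.equiv 2 (Fin 2 → ℝ)).symm ![Real.cos θ, Real.sin θ]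

lemma inner_dir_dir (θ β : ℝ) : ⟪dir θ, dir β⟫ = Real.cos (θ - β) := by
  simp [dir, PiLp.inner_apply, Fin.sum_univ_two, Real.cos_sub, mul_comm]

lemma norm_dir (θ : ℝ) : ‖dir θ‖ = 1 := by
  have h : ⟪dir θ, dir θ⟫ = 1 := by
    rw [inner_dir_dir]; simp
  have := real_inner_self_eq_norm_sq (dir θ)
  nlinarith [norm_nonneg (dir θ)]

/-- An angle-monotone path of width `γ < 180°` has spanning ratio at most
`1 / cos (γ/2)`: its total length is at most the endpoint distance divided by `cos (γ/2)`. -/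
theorem stmt_3 (β γ : ℝ) (hγ0 : 0 ≤ γ) (hγ : γ < π) (k : ℕ)
    (v : ℕ → EuclideanSpace ℝ (Fin 2))
    (hmono : ∀ i < k, ∃ r θ : ℝ, 0 < r ∧ |θ - β| ≤ γ / 2 ∧ v (i + 1) - v i = r • dir θ) :
    ∑ i ∈ Finset.range k, ‖v (i + 1) - v i‖ ≤ ‖v k - v 0‖ / Real.cos (γ / 2) := by
  have hcpos : 0 < Real.cos (γ / 2) := by
    apply Real.cos_pos_of_mem_Ioo
    constructor <;> [linarith; linarith]
  -- key: for each edge, cos(γ/2) * ‖e‖ ≤ ⟪e, dir β⟫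
  have key : ∀ i < k, Real.cos (γ / 2) * ‖v (i + 1) - v i‖ ≤ ⟪v (i + 1) - v i, dir β⟫ := by
    intro i hi
    obtain ⟨r, θ, hr, hθ, he⟩ := hmono i hi
    rw [he, norm_smul, norm_dir, real_inner_smul_left, inner_dir_dir]
    rw [Real.norm_eq_abs, abs_of_pos hr]
    have hcos : Real.cos (γ / 2) ≤ Real.cos (θ - β) := by
      rw [← Real.cos_abs (θ - β)]
      apply Real.cos_le_cos_of_nonneg_of_le_pi (abs_nonneg _) (by linarith) hθ
    nlinarith
  -- telescoping sum of edges = v k - v 0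
  have htel : ∑ i ∈ Finset.range k, (v (i + 1) - v i) = v k - v 0 :=
    Finset.sum_range_sub v k
  have h1 : Real.cos (γ / 2) * ∑ i ∈ Finset.range k, ‖v (i + 1) - v i‖
      ≤ ⟪v k - v 0, dir β⟫ := by
    rw [← htel, sum_inner, Finset.mul_sum]
    exact Finset.sum_le_sum fun i hi => key i (Finset.mem_range.mp hi)
  have h2 : ⟪v k - v 0, dir β⟫ ≤ ‖v k - v 0‖ := by
    calc ⟪v k - v 0, dir β⟫ ≤ ‖v k - v 0‖ * ‖dir β‖ := real_inner_le_norm _ _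
    _ = ‖v k - v 0‖ := by rw [norm_dir, mul_one]
  rw [le_div_iff₀ hcpos]
  nlinarith
end

section
/- If two polygonal paths in ℝ² are both angle-monotone with directions β₁ and β₂ respectively, and each path's edge directions lie in the closed wedge of width 90° around its direction, and moreover β₂ − β₁ = 45° with all edge directions restricted to multiples of 45°, then each path's edges have directions in {β_i, β_i + 45°}; consequently, once the two paths (starting from a common point) use edges of different directions at some step, their point sets from that step onward are disjoint except possibly where both use direction β₁ + 45°. -/
open Real RealInnerProductSpace

lemma inner_dir (θ₁ θ₂ : ℝ) : ⟪dir θ₁, dir θ₂⟫ = Real.cos (θ₁ - θ₂) := by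
  simp only [dir, PiLp.inner_apply, RCLike.inner_apply, conj_trivial,
    WithLp.equiv_symm_apply, WithLp.ofLp_toLp, Fin.sum_univ_two, Matrix.cons_val_zero, Matrix.cons_val_one,
    Matrix.head_cons, Real.cos_sub]
  ring

/-- Two paths from a common point whose edge directions are restricted to
`{β₁, β₁ + 45°}` and `{β₂, β₂ + 45°}` respectively, where `β₂ = β₁ + 45°`, cannot
rejoin after diverging: if the first path starts with an edge in direction `β₁`
(different from all directions available to the second path except `β₁ + 45°`),
then all subsequent vertices of the two paths are distinct. -/
theorem stmt_4 (β : ℝ) (m n : ℕ) (hm : 1 ≤ m) (hn : 1 ≤ n)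
    (p q : ℕ → EuclideanSpace ℝ (Fin 2)) (h0 : p 0 = q 0)
    (hp : ∀ i < m, ∃ r : ℝ, 0 < r ∧
      (p (i + 1) - p i = r • dir β ∨ p (i + 1) - p i = r • dir (β + π / 4)))
    (hq : ∀ i < n, ∃ r : ℝ, 0 < r ∧
      (q (i + 1) - q i = r • dir (β + π / 4) ∨ q (i + 1) - q i = r • dir (β + π / 2)))
    (hdiv : ∃ r : ℝ, 0 < r ∧ p 1 - p 0 = r • dir β) :
    ∀ i, 1 ≤ i → i ≤ m → ∀ j, 1 ≤ j → j ≤ n → p i ≠ q j := by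
  set u := dir (β - π / 4) with hu
  set f : EuclideanSpace ℝ (Fin 2) → ℝ := fun v => ⟪v, u⟫ with hf
  have hfsub : ∀ x y, f (x - y) = f x - f y := fun x y => inner_sub_left x y u
  have c1 : ⟪dir β, u⟫ = Real.sqrt 2 / 2 := by
    rw [hu, inner_dir]
    have : β - (β - π / 4) = π / 4 := by ring
    rw [this, Real.cos_pi_div_four]
  have c2 : ⟪dir (β + π / 4), u⟫ = 0 := by
    rw [hu, inner_dir]
    have : β + π / 4 - (β - π / 4) = π / 2 := by ring
    rw [this, Real.cos_pi_div_two]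
  have c3 : ⟪dir (β + π / 2), u⟫ = -(Real.sqrt 2 / 2) := by
    rw [hu, inner_dir]
    have : β + π / 2 - (β - π / 4) = π - π / 4 := by ring
    rw [this, Real.cos_pi_sub, Real.cos_pi_div_four]
  have s2pos : (0:ℝ) < Real.sqrt 2 / 2 := by positivity
  -- p side: strictly positive
  have hpstep : ∀ i, 1 ≤ i → i ≤ m → 0 < f (p i) - f (p 0) := by
    intro i hi him
    induction i with
    | zero => omega
    | succ k ih =>
      rcases Nat.eq_or_lt_of_le hi with h1 | h1
      · -- k+1 = 1
        obtain ⟨r, hr, he⟩ := hdiv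
        rw [← h1]
        have : f (p 1) - f (p 0) = r * (Real.sqrt 2 / 2) := by
          rw [← hfsub, he]
          show ⟪r • dir β, u⟫ = _
          rw [real_inner_smul_left, c1]
        rw [this]
        positivity
      · have hk1 : 1 ≤ k := by omega
        have hkm : k ≤ m := by omega
        have ihk := ih hk1 hkm
        obtain ⟨r, hr, he⟩ := hp k (by omega)
        have hedge : 0 ≤ f (p (k+1)) - f (p k) := by
          rw [← hfsub]
          rcases he with he | he <;> rw [he] <;>
            [skip; skip] <;> (show (0:ℝ) ≤ ⟪r • _, u⟫) <;> rw [real_inner_smul_left]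
          · rw [c1]; positivity
          · rw [c2]; simp
        linarith
  -- q side: nonpositive
  have hqstep : ∀ j, j ≤ n → f (q j) - f (q 0) ≤ 0 := by
    intro j hj
    induction j with
    | zero => simp
    | succ k ih =>
      have ihk := ih (by omega)
      obtain ⟨r, hr, he⟩ := hq k (by omega)
      have hedge : f (q (k+1)) - f (q k) ≤ 0 := by
        rw [← hfsub]
        rcases he with he | he <;> rw [he] <;>
          (show (⟪r • _, u⟫:ℝ) ≤ 0) <;> rw [real_inner_smul_left]
        · rw [c2]; simp
        · rw [c3]; nlinarith
      linarith
  intro i hi him j hj hjn hpq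
  have h1 := hpstep i hi him
  have h2 := hqstep j hjn
  rw [hpq] at h1
  rw [← h0] at h2
  linarith
end

section
/- Let T be a triangle in ℝ³ whose face normal makes angle φ with the z-axis, with φ < 90°. Let α be one of its interior angles and α⊥ the corresponding angle of its orthogonal projection onto the xy-plane. Then |α − α⊥| → 0 as φ → 0; more precisely, for every ε > 0 there exists δ > 0 such that φ < δ implies |α − α⊥| < ε, uniformly over all triangles. -/
open Real RealInnerProductSpace

/-- Orthogonal projection of `ℝ³` onto the `xy`-plane. -/
noncomputable def proj (A : EuclideanSpace ℝ (Fin 3)) : EuclideanSpace ℝ (Fin 2) :=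
  (WithLp.equiv 2 (Fin 2 → ℝ)).symm ![A 0, A 1]

/-- The unit vector along the positive `z`-axis. -/
noncomputable def ez : EuclideanSpace ℝ (Fin 3) :=
  (WithLp.equiv 2 (Fin 3 → ℝ)).symm ![0, 0, 1]

set_option maxHeartbeats 1000000 in
lemma key_ineq (p q U V s a b k : ℝ) (hp : 0 < p) (hq : 0 < q) (hUp : 0 < U) (hVp : 0 < V)
    (hU : U^2 = p^2 + a^2) (hV : V^2 = q^2 + b^2) (hs : |s| ≤ p*q)
    (ha : |a| ≤ k*p) (hb : |b| ≤ k*q) :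
    |(s + a*b)/(U*V) - s/(p*q)| ≤ 2*k^2 := by
  have hk0 : 0 ≤ k := by nlinarith [abs_nonneg a]
  have hpU : p ≤ U := by nlinarith [sq_nonneg a]
  have hqV : q ≤ V := by nlinarith [sq_nonneg b]
  have hUVge : p*q ≤ U*V := by nlinarith
  have ha2 : a^2 ≤ k^2*p^2 := by nlinarith [sq_abs a, abs_nonneg a]
  have hb2 : b^2 ≤ k^2*q^2 := by nlinarith [sq_abs b, abs_nonneg b]
  have hA : p^2 + a^2 ≤ p^2*(1+k^2) := by nlinarith
  have hB : q^2 + b^2 ≤ q^2*(1+k^2) := by nlinarith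
  have hsq : (U*V)^2 ≤ (p*q*(1+k^2))^2 := by
    have h := mul_le_mul hA hB (by positivity) (by positivity)
    nlinarith [h]
  have hUVle : U*V ≤ p*q*(1+k^2) := by
    nlinarith [hsq, mul_pos hUp hVp, (show (0:ℝ) < p*q*(1+k^2) by positivity)]
  have heq : (s + a*b)/(U*V) - s/(p*q) = s*(p*q - U*V)/((U*V)*(p*q)) + a*b/(U*V) := by
    field_simp; ring
  rw [heq]
  have h1 : |s*(p*q - U*V)/((U*V)*(p*q))| ≤ k^2 := by
    rw [abs_div, abs_of_pos (show (0:ℝ) < U*V*(p*q) by positivity), div_le_iff₀ (by positivity)]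
    have habs : |s*(p*q - U*V)| = |s| * (U*V - p*q) := by
      rw [abs_mul, abs_of_nonpos (show p*q - U*V ≤ 0 by linarith)]; ring
    rw [habs]
    have step1 : |s| * (U*V - p*q) ≤ (p*q) * (U*V - p*q) :=
      mul_le_mul_of_nonneg_right hs (by linarith)
    have step2 : (p*q) * (U*V - p*q) ≤ (p*q) * ((p*q)*k^2) :=
      mul_le_mul_of_nonneg_left (by linarith) (by positivity)
    have step3 := mul_le_mul_of_nonneg_left hUVge (show (0:ℝ) ≤ k^2*(p*q) by positivity)
    nlinarith [step1, step2, step3]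
  have h2 : |a*b/(U*V)| ≤ k^2 := by
    rw [abs_div, abs_of_pos (show (0:ℝ) < U*V by positivity), div_le_iff₀ (by positivity), abs_mul]
    have step1 : |a| * |b| ≤ (k*p)*(k*q) := mul_le_mul ha hb (abs_nonneg b) (by positivity)
    have step2 := mul_le_mul_of_nonneg_left hUVge (show (0:ℝ) ≤ k^2 by positivity)
    nlinarith [step1, step2]
  calc |s*(p*q - U*V)/((U*V)*(p*q)) + a*b/(U*V)|
      ≤ |s*(p*q - U*V)/((U*V)*(p*q))| + |a*b/(U*V)| := abs_add_le _ _
    _ ≤ 2*k^2 := by linarith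

lemma arccos_uc (ε : ℝ) (hε : 0 < ε) : ∃ η > 0, ∀ x ∈ Set.Icc (-1:ℝ) 1,
    ∀ y ∈ Set.Icc (-1:ℝ) 1, |x - y| < η → |Real.arccos x - Real.arccos y| < ε := by
  have hc : UniformContinuousOn Real.arccos (Set.Icc (-1) 1) :=
    (isCompact_Icc).uniformContinuousOn_of_continuous Real.continuous_arccos.continuousOn
  rw [Metric.uniformContinuousOn_iff] at hc
  obtain ⟨η, hη, h⟩ := hc ε hε
  exact ⟨η, hη, fun x hx y hy hxy => by
    simpa [Real.dist_eq] using h x hx y hy (by simpa [Real.dist_eq] using hxy)⟩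

lemma pnorm_sq (A B : EuclideanSpace ℝ (Fin 3)) :
    ‖proj B - proj A‖^2 = (B 0 - A 0)^2 + (B 1 - A 1)^2 := by
  rw [← real_inner_self_eq_norm_sq]
  simp only [PiLp.inner_apply]
  simp [PiLp.inner_apply, proj, Fin.sum_univ_succ, PiLp.sub_apply]

lemma norm3_sq (A B : EuclideanSpace ℝ (Fin 3)) :
    ‖B - A‖^2 = ‖proj B - proj A‖^2 + (B 2 - A 2)^2 := by
  rw [← real_inner_self_eq_norm_sq, ← real_inner_self_eq_norm_sq]
  simp only [PiLp.inner_apply]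
  simp [PiLp.inner_apply, proj, Fin.sum_univ_succ, PiLp.sub_apply]
  ring

set_option maxHeartbeats 1000000 in
lemma zbound (A B n : EuclideanSpace ℝ (Fin 3)) (k : ℝ) (hk0 : 0 < k) (hn : ‖n‖ = 1)
    (hnu : ⟪n, B - A⟫ = 0) (hn2 : Real.cos (Real.arctan k) < n 2) :
    |B 2 - A 2| ≤ k * ‖proj B - proj A‖ := by
  set c := Real.cos (Real.arctan k) with hc
  have hcval : c = 1 / Real.sqrt (1 + k^2) := Real.cos_arctan k
  have hcpos : 0 < c := by rw [hcval]; positivity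
  have hc2 : (1 + k^2) * c^2 = 1 := by
    rw [hcval]; rw [div_pow, one_pow, Real.sq_sqrt (by positivity)]
    field_simp
  have hnsum : n 0^2 + n 1^2 + n 2^2 = 1 := by
    have h2 : ‖n‖^2 = 1 := by rw [hn]; norm_num
    rw [← real_inner_self_eq_norm_sq] at h2
    simp only [PiLp.inner_apply] at h2
    simpa [PiLp.inner_apply, Fin.sum_univ_succ, add_assoc, sq] using h2
  have hou : n 0 * (B 0 - A 0) + n 1 * (B 1 - A 1) + n 2 * (B 2 - A 2) = 0 := by
    have h := hnu
    simp [PiLp.inner_apply, Fin.sum_univ_succ, PiLp.sub_apply, mul_sub] at h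
    linarith
  have hCS : (n 0 * (B 0 - A 0) + n 1 * (B 1 - A 1))^2
      ≤ (n 0^2 + n 1^2) * ((B 0 - A 0)^2 + (B 1 - A 1)^2) := by
    nlinarith [sq_nonneg (n 0 * (B 1 - A 1) - n 1 * (B 0 - A 0))]
  have hp2 := pnorm_sq A B
  set p := ‖proj B - proj A‖ with hp
  have hppos : 0 ≤ p := norm_nonneg _
  -- n2^2 * z^2 ≤ (1 - n2^2) * p^2
  have hmain : n 2^2 * (B 2 - A 2)^2 ≤ (1 - n 2^2) * p^2 := by
    have h1 : n 2 * (B 2 - A 2) = -(n 0 * (B 0 - A 0) + n 1 * (B 1 - A 1)) := by linarith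
    have h2 : (n 2 * (B 2 - A 2))^2 ≤ (n 0^2 + n 1^2) * p^2 := by
      rw [h1, neg_sq, hp2]; exact hCS
    nlinarith [h2]
  have hn2le : n 2 ≤ 1 := by nlinarith [sq_nonneg (n 0), sq_nonneg (n 1)]
  have hcn : c^2 < n 2^2 := by nlinarith
  have h1c : 1 - n 2^2 < k^2 * c^2 := by nlinarith
  have hzsq : (B 2 - A 2)^2 ≤ (k*p)^2 := by
    have s3 : c^2 * (B 2 - A 2)^2 ≤ c^2 * ((k*p)^2) := by
      nlinarith [hmain, mul_le_mul_of_nonneg_right hcn.le (sq_nonneg (B 2 - A 2)),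
        mul_le_mul_of_nonneg_right h1c.le (sq_nonneg p)]
    exact le_of_mul_le_mul_left s3 (by positivity)
  have h := Real.sqrt_le_sqrt hzsq
  rw [Real.sqrt_sq_eq_abs, Real.sqrt_sq_eq_abs] at h
  rwa [abs_of_nonneg (mul_nonneg hk0.le hppos)] at h

/-- Uniformly over all nondegenerate triangles in `ℝ³`, the distortion of an interior
angle under orthogonal projection to the `xy`-plane tends to `0` as the angle `φ`
between the face normal and the `z`-axis tends to `0`. -/
theorem stmt_5 :
    ∀ ε > 0, ∃ δ > 0, ∀ A B C n : EuclideanSpace ℝ (Fin 3),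
      ¬ Collinear ℝ ({A, B, C} : Set (EuclideanSpace ℝ (Fin 3))) →
      ‖n‖ = 1 → ⟪n, B - A⟫ = 0 → ⟪n, C - A⟫ = 0 →
      InnerProductGeometry.angle n ez < δ →
      |InnerProductGeometry.angle (B - A) (C - A) -
        InnerProductGeometry.angle (proj B - proj A) (proj C - proj A)| < ε := by
  intro ε hε
  obtain ⟨η, hη, harc⟩ := arccos_uc ε hε
  set k : ℝ := min 1 (Real.sqrt (η/2) / 2) with hkdef
  have hk0 : 0 < k := lt_min one_pos (by positivity)
  have hk1 : k ≤ 1 := min_le_left _ _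
  have hsqrt : (Real.sqrt (η/2))^2 = η/2 := Real.sq_sqrt (by positivity)
  have h2k : 2*k^2 < η := by
    have hkle : k ≤ Real.sqrt (η/2)/2 := min_le_right _ _
    nlinarith [hk0.le, hsqrt, Real.sqrt_nonneg (η/2)]
  refine ⟨Real.arctan k, by rw [← Real.arctan_zero]; exact Real.arctan_strictMono hk0, ?_⟩
  intro A B C n hcol hn hnu hnv hφ
  have hBA : B ≠ A := fun h => hcol (by rw [h]; simpa using collinear_pair ℝ A C)
  have hCA : C ≠ A := fun h => hcol (by rw [h]; simpa [Set.insert_comm] using collinear_pair ℝ B A)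
  have hUpos : 0 < ‖B - A‖ := norm_pos_iff.2 (sub_ne_zero.2 hBA)
  have hVpos : 0 < ‖C - A‖ := norm_pos_iff.2 (sub_ne_zero.2 hCA)
  -- angle with z-axis gives a lower bound on n 2
  have hinner_e : ⟪n, ez⟫ = n 2 := by
    simp [PiLp.inner_apply, ez, Fin.sum_univ_succ]
  have hez : ‖ez‖ = 1 := by
    simp [EuclideanSpace.norm_eq, ez, Fin.sum_univ_succ]
  have hcosang : Real.cos (InnerProductGeometry.angle n ez) = n 2 := by
    rw [InnerProductGeometry.cos_angle, hinner_e, hn, hez]; norm_num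
  have hδpi : Real.arctan k ≤ π := by
    have := Real.arctan_lt_pi_div_two k
    linarith [Real.pi_pos]
  have hn2 : Real.cos (Real.arctan k) < n 2 := by
    rw [← hcosang]
    exact Real.cos_lt_cos_of_nonneg_of_le_pi (InnerProductGeometry.angle_nonneg n ez) hδpi hφ
  -- z-coordinate bounds
  have hzu : |B 2 - A 2| ≤ k * ‖proj B - proj A‖ := zbound A B n k hk0 hn hnu hn2
  have hzv : |C 2 - A 2| ≤ k * ‖proj C - proj A‖ := zbound A C n k hk0 hn hnv hn2
  have hnu2 := norm3_sq A B
  have hnv2 := norm3_sq A C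
  -- positivity of projected norms
  have hppos : 0 < ‖proj B - proj A‖ := by
    rcases lt_or_eq_of_le (norm_nonneg (proj B - proj A)) with h | h
    · exact h
    · exfalso
      rw [← h] at hzu hnu2
      nlinarith [hUpos, abs_nonneg (B 2 - A 2), sq_abs (B 2 - A 2)]
  have hqpos : 0 < ‖proj C - proj A‖ := by
    rcases lt_or_eq_of_le (norm_nonneg (proj C - proj A)) with h | h
    · exact h
    · exfalso
      rw [← h] at hzv hnv2
      nlinarith [hVpos, abs_nonneg (C 2 - A 2), sq_abs (C 2 - A 2)]
  -- inner products
  have hsb : |⟪proj B - proj A, proj C - proj A⟫| ≤ ‖proj B - proj A‖ * ‖proj C - proj A‖ :=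
    abs_real_inner_le_norm _ _
  have huv : ⟪B - A, C - A⟫ = ⟪proj B - proj A, proj C - proj A⟫ + (B 2 - A 2)*(C 2 - A 2) := by
    simp [PiLp.inner_apply, proj, Fin.sum_univ_succ, PiLp.sub_apply]
    ring
  have hkey := key_ineq ‖proj B - proj A‖ ‖proj C - proj A‖ ‖B - A‖ ‖C - A‖
    ⟪proj B - proj A, proj C - proj A⟫ (B 2 - A 2) (C 2 - A 2) k
    hppos hqpos hUpos hVpos hnu2 hnv2 hsb hzu hzv
  rw [← huv] at hkey
  have hclose : |⟪B - A, C - A⟫ / (‖B - A‖ * ‖C - A‖) -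
      ⟪proj B - proj A, proj C - proj A⟫ / (‖proj B - proj A‖ * ‖proj C - proj A‖)| < η :=
    lt_of_le_of_lt hkey h2k
  have hx := abs_real_inner_div_norm_mul_norm_le_one (B - A) (C - A)
  have hy := abs_real_inner_div_norm_mul_norm_le_one (proj B - proj A) (proj C - proj A)
  rw [abs_le] at hx hy
  unfold InnerProductGeometry.angle
  exact harc _ ⟨hx.1, hx.2⟩ _ ⟨hy.1, hy.2⟩ hclose
end
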